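/- Threshold-or-interval dichotomy for finite multisets of reals (Lemma on finding a splitting threshold): There exists a universal constant C > 0 such that for every α ∈ (0, 1/2), every R > 0, and every finite nonempty multiset P of real numbers, at least one of the following holds: (a) there exists an interval of length at most C·R·log(2 + log(1/α)) containing at least (1 − α/2)·|P| of the elements of P (counted with multiplicity); or (b) there exists t ∈ ℝ such that, setting T₁ = {p ∈ P : p > t − R} and T₂ = {p ∈ P : p < t + R} (as sub-multisets), one has |T₁|² + |T₂|² ≤ |P|²·(1 − α/100)². -/
import Mathlib

private lemma stmt_18_aux_hu (ε : ℝ) (hε : 0 < ε) (hε2 : ε < 1/200) (K₁ : ℕ) (A : ℕ → ℝ)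
    (hAs : ∀ k, A (k + 1) = Real.sqrt ((1 - ε) ^ 2 - (1 - A k) ^ 2))
    (hAinv : ∀ k, 2 * ε ≤ A k ∧ A k ≤ 1 - ε)
    (hAK₁ : 0.45 ≤ A K₁) :
    ∀ j : ℕ, 1 - A (K₁ + 1 + j) ≤ max (48*ε) ((0.36:ℝ)^(2^j)/2) := by
  intro j
  induction j with
  | zero =>
    have hAk := hAinv K₁
    have h3 : Real.sqrt ((0.82:ℝ)^2) ≤ Real.sqrt ((1-ε)^2 - (1 - A K₁)^2) :=
      Real.sqrt_le_sqrt (by nlinarith [hAk.1, hAk.2])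
    rw [Real.sqrt_sq (by norm_num)] at h3
    have h4 : A (K₁ + 1 + 0) = Real.sqrt ((1-ε)^2 - (1 - A K₁)^2) := hAs K₁
    refine le_max_iff.mpr (Or.inr ?_)
    rw [h4]
    norm_num
    linarith
  | succ j ih =>
    have hAk := hAinv (K₁ + 1 + j)
    set u : ℝ := 1 - A (K₁ + 1 + j) with hu_def
    have hu0 : ε ≤ u := by rw [hu_def]; linarith [hAk.2]
    have hu1 : u ≤ 1 - 2*ε := by rw [hu_def]; linarith [hAk.1]
    have hstep : 1 - A (K₁ + 1 + (j+1)) ≤ u^2 + 2*ε := by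
      have hAe : A (K₁ + 1 + (j+1)) = Real.sqrt ((1-ε)^2 - u^2) := by
        rw [show K₁ + 1 + (j+1) = (K₁ + 1 + j) + 1 from by omega, hAs, hu_def]
      rw [hAe]
      have hx0 : 0 ≤ (1-ε)^2 - u^2 := by nlinarith
      have hx1 : (1-ε)^2 - u^2 ≤ 1 := by nlinarith
      have h5 : (1-ε)^2 - u^2 ≤ Real.sqrt ((1-ε)^2 - u^2) :=
        (Real.le_sqrt hx0 hx0).mpr (by nlinarith)
      nlinarith
    rcases le_max_iff.mp ih with hcase | hcase
    · refine le_max_iff.mpr (Or.inl ?_)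
      nlinarith
    · rcases le_or_gt (2*ε) (u^2) with hsub | hsub
      · have hv : (0.36:ℝ)^(2^(j+1)) = ((0.36:ℝ)^(2^j))^2 := by
          rw [pow_succ, pow_mul]
        have hvnn : (0:ℝ) ≤ (0.36:ℝ)^(2^j) := by positivity
        refine le_max_iff.mpr (Or.inr ?_)
        rw [hv]
        nlinarith
      · refine le_max_iff.mpr (Or.inl ?_)
        nlinarith

set_option maxHeartbeats 1600000 in
open Classical in
private lemma stmt_18_key (α R : ℝ) (hα : 0 < α) (hα2 : α < 1 / 2) (hR : 0 < R)
    (P : Multiset ℝ) (hP : P ≠ 0)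
    (H : ∀ t : ℝ, ((Multiset.card P : ℕ) : ℝ) ^ 2 * (1 - α / 100) ^ 2 <
      ((Multiset.card (P.filter fun p => t - R < p) : ℕ) : ℝ) ^ 2 +
      ((Multiset.card (P.filter fun p => p < t + R) : ℕ) : ℝ) ^ 2) :
    ∃ a b : ℝ, b - a ≤ 1000 * R * Real.log (2 + Real.log (1 / α)) ∧
      (1 - α / 2) * (Multiset.card P : ℝ) ≤
        ((Multiset.card (P.filter fun p => a ≤ p ∧ p ≤ b) : ℕ) : ℝ) := by
  have hn : 0 < Multiset.card P := Multiset.card_pos.mpr hP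
  set n : ℕ := Multiset.card P with hn_def
  set ε : ℝ := α / 100 with hε_def
  have hε : 0 < ε := by positivity
  have hε2 : ε < 1 / 200 := by rw [hε_def]; linarith
  set cLE : ℝ → ℕ := fun x => Multiset.card (P.filter fun p => p ≤ x) with hcLE
  set cLT : ℝ → ℕ := fun x => Multiset.card (P.filter fun p => p < x) with hcLT
  -- ## the key step from the failure of all thresholds
  have step : ∀ s a : ℝ, ε ≤ a → a ≤ 1 → a * n ≤ (cLE s : ℝ) →
      Real.sqrt ((1 - ε) ^ 2 - (1 - a) ^ 2) * n ≤ (cLE (s + 2 * R) : ℝ) := by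
    intro s a ha1 ha2 hs
    have hH := H (s + R)
    rw [show s + R - R = s from by ring, show s + R + R = s + 2 * R from by ring] at hH
    have hT1 : (Multiset.card (P.filter fun p => s < p) : ℝ) = (n : ℝ) - cLE s := by
      have h := Multiset.filter_add_not (fun p => s < p) P
      have h2 : P.filter (fun p => ¬ s < p) = P.filter (fun p => p ≤ s) :=
        Multiset.filter_congr (fun x _ => by simp [not_lt])
      have h3 := congrArg Multiset.card h
      rw [Multiset.card_add, h2] at h3
      have h4 : (Multiset.card (P.filter fun p => s < p) : ℝ) + cLE s = n := by
        exact_mod_cast congrArg (fun m : ℕ => (m : ℝ)) h3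
      linarith
    have hT2 : (Multiset.card (P.filter fun p => p < s + 2 * R) : ℝ) ≤ (cLE (s + 2 * R) : ℝ) := by
      exact_mod_cast Nat.cast_le.mpr (Multiset.card_le_card
        (Multiset.monotone_filter_right P (fun b hb => le_of_lt hb)))
    have hD : 0 ≤ (1 - ε) ^ 2 - (1 - a) ^ 2 := by nlinarith
    have hc2 : (0 : ℝ) ≤ (cLE (s + 2 * R) : ℝ) := by positivity
    have hT2nn : (0 : ℝ) ≤ (Multiset.card (P.filter fun p => p < s + 2 * R) : ℝ) := by positivity
    have hT1nn : (0 : ℝ) ≤ (Multiset.card (P.filter fun p => s < p) : ℝ) := by positivity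
    have hsq : ((1 - ε) ^ 2 - (1 - a) ^ 2) * (n : ℝ) ^ 2 ≤ (cLE (s + 2 * R) : ℝ) ^ 2 := by
      have hεα : (1 : ℝ) - α / 100 = 1 - ε := by rw [hε_def]
      rw [hεα] at hH
      nlinarith [hH, hs, hT1, hT2, hT1nn, hT2nn]
    have h5 := Real.sqrt_le_sqrt hsq
    rw [Real.sqrt_mul hD, Real.sqrt_sq (by positivity : (0:ℝ) ≤ (n:ℝ)),
      Real.sqrt_sq hc2] at h5
    exact h5
  -- ## sequence A
  set A : ℕ → ℝ := fun k =>
    Nat.rec (2 * ε) (fun _ a => Real.sqrt ((1 - ε) ^ 2 - (1 - a) ^ 2)) k with hA_def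
  have hA0 : A 0 = 2 * ε := rfl
  have hAs : ∀ k, A (k + 1) = Real.sqrt ((1 - ε) ^ 2 - (1 - A k) ^ 2) := fun _ => rfl
  clear_value A
  have hAinv : ∀ k, 2 * ε ≤ A k ∧ A k ≤ 1 - ε := by
    intro k
    induction k with
    | zero => exact ⟨le_of_eq hA0.symm, by rw [hA0]; linarith⟩
    | succ k ih =>
      obtain ⟨h1, h2⟩ := ih
      rw [hAs]
      constructor
      · have h3 : Real.sqrt ((2*ε)^2) ≤ Real.sqrt ((1 - ε) ^ 2 - (1 - A k) ^ 2) :=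
          Real.sqrt_le_sqrt (by nlinarith)
        rwa [Real.sqrt_sq (by positivity)] at h3
      · have h3 : Real.sqrt ((1 - ε) ^ 2 - (1 - A k) ^ 2) ≤ Real.sqrt ((1-ε)^2) :=
          Real.sqrt_le_sqrt (by nlinarith)
        rwa [Real.sqrt_sq (by linarith)] at h3
  -- ## quantile start point
  have hPfin : P.toFinset.Nonempty := Multiset.toFinset_nonempty.mpr hP
  have hxmax : (cLE (P.toFinset.max' hPfin) : ℝ) = n := by
    have h : P.filter (fun p => p ≤ P.toFinset.max' hPfin) = P :=
      Multiset.filter_eq_self.mpr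
        (fun p hp => Finset.le_max' _ p (Multiset.mem_toFinset.mpr hp))
    simp only [hcLE, h, hn_def]
  have hSne : (P.toFinset.filter (fun x => 2 * ε * n ≤ (cLE x : ℝ))).Nonempty := by
    refine ⟨P.toFinset.max' hPfin, Finset.mem_filter.mpr ⟨Finset.max'_mem _ _, ?_⟩⟩
    rw [hxmax]
    have : (0:ℝ) ≤ (n:ℝ) := by positivity
    nlinarith
  set s₀ : ℝ := (P.toFinset.filter (fun x => 2 * ε * n ≤ (cLE x : ℝ))).min' hSne with hs₀_def
  have hs₀1 : 2 * ε * n ≤ (cLE s₀ : ℝ) :=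
    (Finset.mem_filter.mp (Finset.min'_mem _ hSne)).2
  have hs₀2 : (cLT s₀ : ℝ) ≤ 2 * ε * n := by
    by_contra hcon
    push_neg at hcon
    have hQ : P.filter (fun p => p < s₀) ≠ 0 := by
      intro h0
      have : (cLT s₀ : ℝ) = 0 := by simp [hcLT, h0]
      have hnn : (0:ℝ) ≤ 2 * ε * n := by positivity
      linarith
    have hQfin : (P.filter (fun p => p < s₀)).toFinset.Nonempty :=
      Multiset.toFinset_nonempty.mpr hQ
    set y : ℝ := (P.filter (fun p => p < s₀)).toFinset.max' hQfin with hy_def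
    have hyQ : y ∈ P.filter (fun p => p < s₀) :=
      Multiset.mem_toFinset.mp (Finset.max'_mem _ _)
    have hyP : y ∈ P := Multiset.mem_of_mem_filter hyQ
    have hys₀ : y < s₀ := (Multiset.mem_filter.mp hyQ).2
    have hle : (cLT s₀ : ℝ) ≤ (cLE y : ℝ) := by
      have heq : P.filter (fun p => p < s₀)
          = (P.filter (fun p => p ≤ y)).filter (fun p => p < s₀) := by
        rw [Multiset.filter_filter]
        refine Multiset.filter_congr (fun x hx => ?_)
        constructor
        · intro h
          have hxQ : x ∈ P.filter (fun p => p < s₀) := Multiset.mem_filter.mpr ⟨hx, h⟩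
          have hxy : x ≤ y := Finset.le_max' _ x (Multiset.mem_toFinset.mpr hxQ)
          exact ⟨h, hxy⟩
        · exact fun h => h.1
      have : cLT s₀ ≤ cLE y := by
        rw [hcLT, hcLE]
        simp only
        rw [heq]
        exact Multiset.card_le_card (Multiset.filter_le _ _)
      exact_mod_cast this
    have hyS : y ∈ P.toFinset.filter (fun x => 2 * ε * n ≤ (cLE x : ℝ)) :=
      Finset.mem_filter.mpr ⟨Multiset.mem_toFinset.mpr hyP, by linarith⟩
    have := Finset.min'_le _ y hyS
    rw [← hs₀_def] at this
    linarith
  clear_value n ε cLE cLT s₀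
  -- ## counting induction
  have hcnt : ∀ k : ℕ, A k * n ≤ (cLE (s₀ + 2 * R * k) : ℝ) := by
    intro k
    induction k with
    | zero => simp only [Nat.cast_zero, mul_zero, add_zero, hA0]; exact hs₀1
    | succ k ih =>
      have h := step (s₀ + 2 * R * k) (A k)
        (le_trans (by linarith) (hAinv k).1) (by linarith [(hAinv k).2]) ih
      rw [show s₀ + 2 * R * (k:ℝ) + 2 * R = s₀ + 2 * R * ((k:ℝ) + 1) from by ring] at h
      push_cast
      rw [hAs]
      exact h
  -- ## w sequence : iterated square roots of 2ε
  set w : ℕ → ℝ := fun k => Nat.rec (2 * ε) (fun _ x => Real.sqrt x) k with hw_def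
  have hw0 : w 0 = 2 * ε := rfl
  have hws : ∀ k, w (k + 1) = Real.sqrt (w k) := fun _ => rfl
  clear_value w
  have hwinv : ∀ k, 2 * ε ≤ w k ∧ w k ≤ 1 := by
    intro k
    induction k with
    | zero => rw [hw0]; exact ⟨le_refl _, by linarith⟩
    | succ k ih =>
      obtain ⟨h1, h2⟩ := ih
      rw [hws]
      constructor
      · have h3 : Real.sqrt ((2*ε)^2) ≤ Real.sqrt (w k) := Real.sqrt_le_sqrt (by nlinarith)
        rwa [Real.sqrt_sq (by positivity)] at h3
      · exact Real.sqrt_le_one.mpr h2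
  have hwlb : ∀ k, ∀ y : ℝ, 0 ≤ y → y ^ (2 ^ k) ≤ 2 * ε → y ≤ w k := by
    intro k
    induction k with
    | zero => intro y hy h; rw [hw0.symm] at h; simpa using h
    | succ k ih =>
      intro y hy h
      rw [hws]
      rw [show y = Real.sqrt (y^2) from (Real.sqrt_sq hy).symm]
      apply Real.sqrt_le_sqrt
      apply ih (y^2) (by positivity)
      rw [← pow_mul]
      rw [show 2 * 2 ^ k = 2 ^ (k+1) from (pow_succ' 2 k).symm] at *
      exact h
  -- ## phase 1 : A dominates w/2 up to the 0.45 cap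
  have hS1 : ∀ k, min 0.45 (w k / 2) ≤ A k := by
    intro k
    induction k with
    | zero =>
      rw [hA0, hw0]
      have h1 : min (0.45:ℝ) (2*ε/2) ≤ 2*ε/2 := min_le_right _ _
      linarith
    | succ k ih =>
      have hAk := hAinv k
      have hwk := hwinv k
      rcases le_or_gt 0.45 (A k) with hc | hc
      · have h3 : Real.sqrt ((0.82:ℝ)^2) ≤ Real.sqrt ((1-ε)^2 - (1 - A k)^2) :=
          Real.sqrt_le_sqrt (by nlinarith [hAk.1, hAk.2])
        rw [Real.sqrt_sq (by norm_num)] at h3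
        rw [hAs]
        calc min (0.45:ℝ) (w (k+1) / 2) ≤ 0.45 := min_le_left _ _
        _ ≤ 0.82 := by norm_num
        _ ≤ _ := h3
      · have hwk2 : w k / 2 ≤ A k := by
          rcases le_total (0.45:ℝ) (w k / 2) with h | h
          · rw [min_eq_left h] at ih; linarith
          · rwa [min_eq_right h] at ih
        rw [hAs, hws]
        refine le_trans (min_le_right _ _) ?_
        have hDnn : 0 ≤ (1-ε)^2 - (1 - A k)^2 := by nlinarith [hAk.1, hAk.2]
        rw [show Real.sqrt (w k) / 2 = Real.sqrt (w k) * (1/2) from by ring]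
        rw [show (1/2 : ℝ) = Real.sqrt ((1/2)^2) from (Real.sqrt_sq (by norm_num)).symm]
        rw [← Real.sqrt_mul (by nlinarith [hwk.1] : (0:ℝ) ≤ w k)]
        apply Real.sqrt_le_sqrt
        nlinarith [hAk.1, hAk.2, hwk2, hwk.1]
  -- ## numeric constants
  set L : ℝ := Real.log (1 / α) with hL_def
  have hLpos : Real.log 2 ≤ L := by
    rw [hL_def]
    apply Real.log_le_log (by norm_num)
    rw [le_div_iff₀ hα]; linarith
  have hL0 : 0 < L := lt_of_lt_of_le (by positivity) hLpos
  have hL069 : (0.69 : ℝ) ≤ L := le_trans (by nlinarith [Real.log_two_gt_d9]) hLpos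
  set G : ℝ := Real.log (2 + L) with hG_def
  have hG069 : (0.69 : ℝ) ≤ G := by
    have h : Real.log 2 ≤ G := by
      rw [hG_def]; exact Real.log_le_log (by norm_num) (by linarith)
    nlinarith [Real.log_two_gt_d9]
  have hlog2 : (0.69 : ℝ) ≤ Real.log 2 := by nlinarith [Real.log_two_gt_d9]
  clear_value L G
  set K₁ : ℕ := ⌈Real.logb 2 (10 * L + 80)⌉₊ with hK₁_def
  have hlogb1nn : 0 ≤ Real.logb 2 (10 * L + 80) := Real.logb_nonneg (by norm_num) (by linarith)
  have hM₁ : 10 * L + 80 ≤ ((2 ^ K₁ : ℕ) : ℝ) := by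
    have h1 : 10 * L + 80 = (2:ℝ) ^ (Real.logb 2 (10 * L + 80)) :=
      (Real.rpow_logb (by norm_num) (by norm_num) (by linarith)).symm
    have h2 : (2:ℝ) ^ (Real.logb 2 (10 * L + 80)) ≤ (2:ℝ) ^ ((K₁ : ℕ) : ℝ) :=
      Real.rpow_le_rpow_of_exponent_le one_le_two (Nat.le_ceil _)
    rw [Real.rpow_natCast] at h2
    push_cast
    linarith
  have hK₁u : (K₁ : ℝ) ≤ 7.25 * G + 1 := by
    have h1 : (K₁ : ℝ) < Real.logb 2 (10 * L + 80) + 1 := Nat.ceil_lt_add_one hlogb1nn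
    have h2 : Real.logb 2 (10 * L + 80) = Real.log (10 * L + 80) / Real.log 2 := rfl
    have hpoly : 10 * L + 80 ≤ (2 + L) ^ 5 := by
      have h269 : (2.69:ℝ) ≤ 2 + L := by linarith
      have h4 : (2.69:ℝ)^4 ≤ (2+L)^4 := pow_le_pow_left₀ (by norm_num) h269 4
      have h5 : (2.69:ℝ)^4 * (2+L) ≤ (2+L)^4 * (2+L) :=
        mul_le_mul h4 (le_refl _) (by linarith) (by positivity)
      nlinarith
    have h3 : Real.log (10 * L + 80) ≤ 5 * G := by
      have h := Real.log_le_log (by linarith : (0:ℝ) < 10 * L + 80) hpoly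
      rwa [Real.log_pow, Nat.cast_ofNat, hG_def.symm] at h
    have h4 : Real.log (10 * L + 80) / Real.log 2 ≤ (5 * G) / 0.69 :=
      div_le_div₀ (by positivity) h3 (by norm_num) hlog2
    have h6 : (5 * G) / 0.69 ≤ 7.25 * G := by
      rw [div_le_iff₀ (by norm_num)]
      nlinarith
    linarith
  have h09M : (0.9 : ℝ) ^ (2 ^ K₁) ≤ 2 * ε := by
    have h1 : (0.9:ℝ) ≤ Real.exp (-(1/10)) := by nlinarith [Real.add_one_le_exp (-(1/10):ℝ)]
    have h2 : (0.9:ℝ)^(2^K₁) ≤ Real.exp (-(1/10)) ^ (2^K₁) :=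
      pow_le_pow_left₀ (by norm_num) h1 _
    have h3 : Real.exp (-(1/10)) ^ (2^K₁) = Real.exp (-(((2^K₁ : ℕ):ℝ)) / 10) := by
      rw [← Real.exp_nat_mul]; congr 1; ring
    have hlog50 : Real.log 50 ≤ 8 := by
      calc Real.log 50 ≤ Real.log (2^6) := Real.log_le_log (by norm_num) (by norm_num)
      _ = 6 * Real.log 2 := by rw [Real.log_pow]; push_cast; ring
      _ ≤ 8 := by nlinarith [Real.log_two_lt_d9]
    have hlog2ε : Real.log (2*ε) = Real.log α - Real.log 50 := by
      rw [show 2*ε = α/50 from by rw [hε_def]; ring,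
        Real.log_div (ne_of_gt hα) (by norm_num)]
    have hLα : L = - Real.log α := by rw [hL_def, one_div, Real.log_inv]
    have h4 : Real.exp (-(((2^K₁ : ℕ):ℝ)) / 10) ≤ 2 * ε := by
      rw [← Real.exp_log (show (0:ℝ) < 2*ε by linarith)]
      apply Real.exp_le_exp.mpr
      rw [hlog2ε]
      linarith
    calc (0.9:ℝ)^(2^K₁) ≤ Real.exp (-(1/10)) ^ (2^K₁) := h2
    _ = Real.exp (-(((2^K₁ : ℕ):ℝ)) / 10) := h3
    _ ≤ 2 * ε := h4
  clear_value K₁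
  set K₂ : ℕ := ⌈Real.logb 2 (L + 1)⌉₊ with hK₂_def
  have hlogb2nn : 0 ≤ Real.logb 2 (L + 1) := Real.logb_nonneg (by norm_num) (by linarith)
  have hM₂ : L + 1 ≤ ((2 ^ K₂ : ℕ) : ℝ) := by
    have h1 : L + 1 = (2:ℝ) ^ (Real.logb 2 (L + 1)) :=
      (Real.rpow_logb (by norm_num) (by norm_num) (by linarith)).symm
    have h2 : (2:ℝ) ^ (Real.logb 2 (L + 1)) ≤ (2:ℝ) ^ ((K₂ : ℕ) : ℝ) :=
      Real.rpow_le_rpow_of_exponent_le one_le_two (Nat.le_ceil _)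
    rw [Real.rpow_natCast] at h2
    push_cast
    linarith
  have hK₂u : (K₂ : ℝ) ≤ 1.45 * G + 1 := by
    have h1 : (K₂ : ℝ) < Real.logb 2 (L + 1) + 1 := Nat.ceil_lt_add_one hlogb2nn
    have h3 : Real.log (L + 1) ≤ G := by
      rw [hG_def]; exact Real.log_le_log (by linarith) (by linarith)
    have h4 : Real.log (L + 1) / Real.log 2 ≤ G / 0.69 :=
      div_le_div₀ (by linarith) h3 (by norm_num) hlog2
    have h5 : Real.logb 2 (L + 1) = Real.log (L + 1) / Real.log 2 := rfl
    have h6 : G / 0.69 ≤ 1.45 * G := by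
      rw [div_le_iff₀ (by norm_num)]
      nlinarith
    linarith
  have h036M : (0.36 : ℝ) ^ (2 ^ K₂) ≤ 96 * ε := by
    have he1 := Real.exp_one_gt_d9
    have he2 := Real.exp_one_lt_d9
    have hepos : (0:ℝ) < Real.exp 1 := Real.exp_pos 1
    have hinv : Real.exp 1 * (Real.exp 1)⁻¹ = 1 := mul_inv_cancel₀ (ne_of_gt hepos)
    have hinvnn : (0:ℝ) ≤ (Real.exp 1)⁻¹ := by positivity
    have h1 : (0.36:ℝ) ≤ Real.exp (-1) := by
      rw [Real.exp_neg]
      nlinarith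
    have h1b : Real.exp (-1) ≤ 0.37 := by
      rw [Real.exp_neg]
      nlinarith
    have h2 : (0.36:ℝ)^(2^K₂) ≤ Real.exp (-1) ^ (2^K₂) :=
      pow_le_pow_left₀ (by norm_num) h1 _
    have h3 : Real.exp (-1) ^ (2^K₂) = Real.exp (-(((2^K₂ : ℕ):ℝ))) := by
      rw [← Real.exp_nat_mul]; congr 1; ring
    have hlog096 : (-1:ℝ) ≤ Real.log 0.96 := by
      rw [Real.le_log_iff_exp_le (by norm_num : (0:ℝ) < 0.96)]
      linarith
    have hlog96ε : Real.log (96*ε) = Real.log 0.96 + Real.log α := by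
      rw [show (96:ℝ)*ε = 0.96*α from by rw [hε_def]; ring,
        Real.log_mul (by norm_num) (ne_of_gt hα)]
    have hLα : L = - Real.log α := by rw [hL_def, one_div, Real.log_inv]
    have h4 : Real.exp (-(((2^K₂ : ℕ):ℝ))) ≤ 96 * ε := by
      rw [← Real.exp_log (show (0:ℝ) < 96*ε by linarith)]
      apply Real.exp_le_exp.mpr
      rw [hlog96ε]
      linarith
    calc (0.36:ℝ)^(2^K₂) ≤ Real.exp (-1) ^ (2^K₂) := h2
    _ = Real.exp (-(((2^K₂ : ℕ):ℝ))) := h3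
    _ ≤ 96 * ε := h4
  clear_value K₂
  -- ## A reaches 0.45 at K₁
  have hAK₁ : 0.45 ≤ A K₁ := by
    have hw09 : (0.9:ℝ) ≤ w K₁ := hwlb K₁ 0.9 (by norm_num) h09M
    refine le_trans (le_min (le_refl _) (by linarith)) (hS1 K₁)
  -- ## phase 2 : squaring down the complement
  have hu : ∀ j : ℕ, 1 - A (K₁ + 1 + j) ≤ max (48*ε) ((0.36:ℝ)^(2^j)/2) :=
    stmt_18_aux_hu ε hε (by linarith) K₁ A hAs hAinv hAK₁
  -- ## conclusion
  set kst : ℕ := K₁ + 1 + K₂ with hkst_def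
  have hAkst : 1 - 48*ε ≤ A kst := by
    have h1 := hu K₂
    have h2 : max (48*ε) ((0.36:ℝ)^(2^K₂)/2) ≤ 48*ε :=
      max_le (le_refl _) (by linarith)
    linarith [le_trans h1 h2]
  have hcard := hcnt kst
  have hnn : (0:ℝ) ≤ (n:ℝ) := by positivity
  refine ⟨s₀, s₀ + 2*R*(kst:ℝ), ?_, ?_⟩
  · have hkb : (kst:ℝ) ≤ 14*G := by
      rw [hkst_def]
      push_cast
      nlinarith [hK₁u, hK₂u, hG069]
    have hG0 : (0:ℝ) < G := by linarith
    have h7 : s₀ + 2*R*(kst:ℝ) - s₀ = 2*R*(kst:ℝ) := by ring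
    rw [h7]
    nlinarith [mul_le_mul_of_nonneg_left hkb (le_of_lt (by positivity : (0:ℝ) < 2*R)),
      mul_pos hR hG0]
  · have hintv : (cLE (s₀ + 2*R*(kst:ℝ)) : ℝ) ≤
        ((Multiset.card (P.filter fun p => s₀ ≤ p ∧ p ≤ s₀ + 2*R*(kst:ℝ)) : ℕ) : ℝ)
          + (cLT s₀ : ℝ) := by
      have h := Multiset.filter_add_not (fun p => s₀ ≤ p)
        (P.filter (fun p => p ≤ s₀ + 2*R*(kst:ℝ)))
      have h3 := congrArg Multiset.card h
      rw [Multiset.card_add, Multiset.filter_filter, Multiset.filter_filter] at h3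
      have h4 : Multiset.card (P.filter fun a => ¬ s₀ ≤ a ∧ a ≤ s₀ + 2*R*(kst:ℝ))
          ≤ cLT s₀ := by
        rw [hcLT]
        simp only
        exact Multiset.card_le_card
          (Multiset.monotone_filter_right P (fun b hb => lt_of_not_ge hb.1))
      have h5 : (Multiset.card ((P.filter fun p => p ≤ s₀ + 2*R*(kst:ℝ))) : ℝ)
          = (cLE (s₀ + 2*R*(kst:ℝ)) : ℝ) := by rw [hcLE]
      rw [← h5]
      have h6 : (Multiset.card (P.filter fun a => s₀ ≤ a ∧ a ≤ s₀ + 2*R*(kst:ℝ)) : ℝ)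
          + (Multiset.card (P.filter fun a => ¬ s₀ ≤ a ∧ a ≤ s₀ + 2*R*(kst:ℝ)) : ℝ)
          = (Multiset.card ((P.filter fun p => p ≤ s₀ + 2*R*(kst:ℝ))) : ℝ) := by
        exact_mod_cast congrArg (fun m : ℕ => (m : ℝ)) h3
      have h7 : (Multiset.card (P.filter fun a => ¬ s₀ ≤ a ∧ a ≤ s₀ + 2*R*(kst:ℝ)) : ℝ)
          ≤ (cLT s₀ : ℝ) := by exact_mod_cast h4
      linarith
    have h1 : (1 - 48*ε) * (n:ℝ) ≤ (cLE (s₀ + 2*R*(kst:ℝ)) : ℝ) := by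
      nlinarith [hcard, hAkst, hnn]
    have h2 : (1 - α/2) * (n:ℝ) = (1 - 48*ε) * (n:ℝ) - 2 * ε * (n:ℝ) := by
      rw [hε_def]; ring
    rw [h2]
    linarith [hintv, h1, hs₀2]

open Classical in
/-- Threshold-or-interval dichotomy for finite multisets of reals: either some interval of
length `O(R log(2 + log(1/α)))` contains a `(1 - α/2)`-fraction of the points, or there is a
threshold `t` for which the overlapping split `T₁ = {p > t - R}`, `T₂ = {p < t + R}` satisfies
`|T₁|² + |T₂|² ≤ |P|² (1 - α/100)²`. -/
theorem stmt_18 : ∃ C > (0 : ℝ), ∀ α R : ℝ, 0 < α → α < 1 / 2 → 0 < R →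
    ∀ P : Multiset ℝ, P ≠ 0 →
      (∃ a b : ℝ, b - a ≤ C * R * Real.log (2 + Real.log (1 / α)) ∧
        (1 - α / 2) * (Multiset.card P : ℝ) ≤
          ((Multiset.card (P.filter fun p => a ≤ p ∧ p ≤ b) : ℕ) : ℝ)) ∨
      (∃ t : ℝ,
        ((Multiset.card (P.filter fun p => t - R < p) : ℕ) : ℝ) ^ 2 +
          ((Multiset.card (P.filter fun p => p < t + R) : ℕ) : ℝ) ^ 2 ≤
            ((Multiset.card P : ℕ) : ℝ) ^ 2 * (1 - α / 100) ^ 2) := by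
  refine ⟨1000, by norm_num, ?_⟩
  intro α R hα hα2 hR P hP
  by_cases hb : ∃ t : ℝ,
      ((Multiset.card (P.filter fun p => t - R < p) : ℕ) : ℝ) ^ 2 +
        ((Multiset.card (P.filter fun p => p < t + R) : ℕ) : ℝ) ^ 2 ≤
          ((Multiset.card P : ℕ) : ℝ) ^ 2 * (1 - α / 100) ^ 2
  · exact Or.inr hb
  · push_neg at hb
    exact Or.inl (stmt_18_key α R hα hα2 hR P hP hb)
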